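/- Let X ~ N(μ₁, σ₁²I_n) and consider conditional Gaussian densities. The posterior q(x^(t-1) | x^(t), x^(0)) in the DDPM forward process is Gaussian with mean μ̃ = (√(α^(t)) (1-ᾱ^(t-1)) x^(t) + √(ᾱ^(t-1)) β^(t) x^(0)) / (1-ᾱ^(t)) and variance β̃^(t) = (1-ᾱ^(t-1))β^(t)/(1-ᾱ^(t)), where q(x^(t)|x^(t-1)) = N(√(α^(t)) x^(t-1), β^(t) I) and q(x^(t-1)|x^(0)) = N(√(ᾱ^(t-1)) x^(0), (1-ᾱ^(t-1)) I). -/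

import Mathlib

open Real

/-- Density of the isotropic Gaussian `N(m, v·I_n)` on `ℝⁿ`. -/
noncomputable def gpdf {n : ℕ} (m : EuclideanSpace ℝ (Fin n)) (v : ℝ)
    (x : EuclideanSpace ℝ (Fin n)) : ℝ :=
  (2 * π * v) ^ (-(n : ℝ) / 2) * Real.exp (-‖x - m‖ ^ 2 / (2 * v))

/-!
Gaussian conjugacy by completing the square. For a likelihood `N(y; s x, a)` and a prior
`N(x; m, b)`, the quadratic form in the exponent splits as
`‖y - s x‖²/a + ‖x - m‖²/b = ‖y - s m‖²/(a + s²b) + ‖x - μ‖²/v`, with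
`μ = (s b y + a m)/(a + s²b)` and `v = ab/(a + s²b)`; since also `(2πa)(2πb) = (2π(a + s²b))(2πv)`,
the joint density is the evidence `N(y; s m, a + s²b)` times the posterior `N(x; μ, v)`.
For DDPM, `a = β`, `s = √α`, `b = 1 - ᾱ'` and `m = √ᾱ' x⁽⁰⁾`, so `a + s²b = 1 - ᾱ`.
-/

section CompletingTheSquare

variable {E : Type*} [NormedAddCommGroup E] [InnerProductSpace ℝ E] {a b s : ℝ}

theorem norm_sq_div_add_norm_sq_div_eq (ha : a ≠ 0) (hb : b ≠ 0) (hp : a + s ^ 2 * b ≠ 0)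
    (u w : E) :
    ‖u‖ ^ 2 / a + ‖w‖ ^ 2 / b
      = ‖u + s • w‖ ^ 2 / (a + s ^ 2 * b)
        + ‖a • w - (s * b) • u‖ ^ 2 / (a * b * (a + s ^ 2 * b)) := by
  rw [norm_add_sq_real, norm_sub_sq_real]
  simp only [norm_smul, real_inner_smul_left, real_inner_smul_right, real_inner_comm w u,
    Real.norm_eq_abs, mul_pow, sq_abs]
  -- keeps `field_simp` from expanding `a + s²b` into a form `ring` cannot cancel against
  generalize hp' : a + s ^ 2 * b = p at hp ⊢
  field_simp
  rw [← hp']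
  ring

theorem norm_sub_smul_sq_div_add_norm_sub_sq_div (ha : a ≠ 0) (hb : b ≠ 0)
    (hp : a + s ^ 2 * b ≠ 0) (x y m : E) :
    ‖y - s • x‖ ^ 2 / a + ‖x - m‖ ^ 2 / b
      = ‖y - s • m‖ ^ 2 / (a + s ^ 2 * b)
        + ‖x - ((s * b / (a + s ^ 2 * b)) • y + (a / (a + s ^ 2 * b)) • m)‖ ^ 2
            / (a * b / (a + s ^ 2 * b)) := by
  have hmarg : y - s • m = (y - s • x) + s • (x - m) := by module
  have hpost : x - ((s * b / (a + s ^ 2 * b)) • y + (a / (a + s ^ 2 * b)) • m)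
      = (a + s ^ 2 * b)⁻¹ • (a • (x - m) - (s * b) • (y - s • x)) := by
    rw [eq_inv_smul_iff₀ hp]
    simp only [smul_sub, smul_add, smul_smul, mul_div_cancel₀ _ hp]
    module
  rw [norm_sq_div_add_norm_sq_div_eq ha hb hp, hmarg, hpost, norm_smul, mul_pow,
    Real.norm_eq_abs, sq_abs]
  field_simp

end CompletingTheSquare

theorem gpdf_smul_mul_gpdf {n : ℕ} {a b s : ℝ} (ha : 0 < a) (hb : 0 < b)
    (x y m : EuclideanSpace ℝ (Fin n)) :
    gpdf (s • x) a y * gpdf m b x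
      = gpdf (s • m) (a + s ^ 2 * b) y
        * gpdf ((s * b / (a + s ^ 2 * b)) • y + (a / (a + s ^ 2 * b)) • m)
            (a * b / (a + s ^ 2 * b)) x := by
  have hp : 0 < a + s ^ 2 * b := by positivity
  have hconst : (2 * π * a) * (2 * π * b)
      = (2 * π * (a + s ^ 2 * b)) * (2 * π * (a * b / (a + s ^ 2 * b))) := by
    field_simp
  have hexp := norm_sub_smul_sq_div_add_norm_sub_sq_div ha.ne' hb.ne' hp.ne' x y m
  unfold gpdf
  rw [mul_mul_mul_comm, mul_mul_mul_comm (_ ^ _) (rexp _), ← exp_add, ← exp_add,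
    ← mul_rpow (by positivity) (by positivity), ← mul_rpow (by positivity) (by positivity), hconst]
  congr 2
  simp only [div_mul_eq_div_div_swap]
  linear_combination (-1 / 2 : ℝ) * hexp

/-- The DDPM posterior `q(x⁽ᵗ⁻¹⁾ | x⁽ᵗ⁾, x⁽⁰⁾)` is Gaussian with
mean `μ̃ = (√α⁽ᵗ⁾(1-ᾱ⁽ᵗ⁻¹⁾)x⁽ᵗ⁾ + √(ᾱ⁽ᵗ⁻¹⁾)β⁽ᵗ⁾x⁽⁰⁾)/(1-ᾱ⁽ᵗ⁾)` and variance
`β̃⁽ᵗ⁾ = (1-ᾱ⁽ᵗ⁻¹⁾)β⁽ᵗ⁾/(1-ᾱ⁽ᵗ⁾)`:  by Bayes' rule, the product of densities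
`q(x⁽ᵗ⁾|x⁽ᵗ⁻¹⁾)·q(x⁽ᵗ⁻¹⁾|x⁽⁰⁾)` is, as a function of `x⁽ᵗ⁻¹⁾`, proportional
(with a factor depending only on `x⁽ᵗ⁾, x⁽⁰⁾`) to the stated Gaussian density. -/
theorem stmt_11 {n : ℕ} (α β abar' abar : ℝ)
    (hα : α ∈ Set.Ioo (0 : ℝ) 1) (hβ : β = 1 - α)
    (habar' : abar' ∈ Set.Ioo (0 : ℝ) 1) (habar : abar = α * abar') :
    ∃ C : EuclideanSpace ℝ (Fin n) → EuclideanSpace ℝ (Fin n) → ℝ,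
      ∀ xt x0 xprev : EuclideanSpace ℝ (Fin n),
        gpdf (Real.sqrt α • xprev) β xt * gpdf (Real.sqrt abar' • x0) (1 - abar') xprev
          = C xt x0 *
            gpdf ((Real.sqrt α * (1 - abar') / (1 - abar)) • xt
                    + (Real.sqrt abar' * β / (1 - abar)) • x0)
              ((1 - abar') * β / (1 - abar)) xprev := by
  obtain ⟨hα0, hα1⟩ := hα
  have hβ0 : 0 < β := by linarith
  have hb0 : 0 < 1 - abar' := by linarith [habar'.2]
  have hevidence : β + √α ^ 2 * (1 - abar') = 1 - abar := by
    rw [sq_sqrt hα0.le]; linarith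
  refine ⟨fun xt x0 => gpdf ((√α * √abar') • x0) (1 - abar) xt, fun xt x0 xprev => ?_⟩
  rw [gpdf_smul_mul_gpdf hβ0 hb0, hevidence, smul_smul, smul_smul, div_mul_eq_mul_div,
    mul_comm β √abar', mul_comm β (1 - abar')]
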